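/- Let ε > 0 and fix a rectangle 𝓡 = 𝓤 × 𝓜 with μ₁(𝓡) = 0. Let T be a partition, F ⊆ C × D a k-matching, and H, H* ⊆ F two 3-matchings such that both (T,H) and (T,H*) are good. Then |H ∩ H*| ≥ 2. -/

import Mathlib

open scoped Classical

namespace MatchingLB

/-- Edges of the complete graph on `n` nodes. -/
abbrev Edge (n : ℕ) := Sym2 (Fin n)

/-- Number of nodes: `n = 3m(k−3) + 2k`. -/
def npar (k m : ℕ) : ℕ := 3 * m * (k - 3) + 2 * k

/-- Cut size: `t = ((m+1)/2)·(k−3) + 3`. -/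
def tpar (k m : ℕ) : ℕ := (m + 1) / 2 * (k - 3) + 3

/-- The cut `δ(U)`: all edges with exactly one endpoint in `U`. -/
def cutSet {n : ℕ} (U : Set (Fin n)) : Set (Edge n) :=
  {e | ∃ a b : Fin n, e = s(a, b) ∧ a ∈ U ∧ b ∉ U}

/-- A matching: a set of non-loop edges that are pairwise vertex disjoint. -/
def IsMatching {n : ℕ} (M : Finset (Edge n)) : Prop :=
  (∀ e ∈ M, ¬ e.IsDiag) ∧
  (∀ e ∈ M, ∀ f ∈ M, e ≠ f → ∀ v : Fin n, v ∈ e → v ∉ f)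

/-- A perfect matching of the complete graph on `n` nodes. -/
def IsPM {n : ℕ} (M : Finset (Edge n)) : Prop :=
  IsMatching M ∧ ∀ v : Fin n, ∃ e ∈ M, v ∈ e

/-- `Q_ℓ`: pairs `(U, M)` of a `t`-node cut and a perfect matching with `|δ(U) ∩ M| = ℓ`. -/
def Qset (n t ℓ : ℕ) : Set (Finset (Fin n) × Finset (Edge n)) :=
  {p | p.1.card = t ∧ IsPM p.2 ∧
    ((p.2 : Set (Edge n)) ∩ cutSet (p.1 : Set (Fin n))).ncard = ℓ}

/-- The uniform measure `μ_ℓ(𝓡) = |𝓡 ∩ Q_ℓ| / |Q_ℓ|` of a set of pairs on `Q_ℓ`. -/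
noncomputable def mu (n t ℓ : ℕ) (R : Set (Finset (Fin n) × Finset (Edge n))) : ℝ :=
  ((R ∩ Qset n t ℓ).ncard : ℝ) / ((Qset n t ℓ).ncard : ℝ)

/-- Labels of the blocks of a partition `T = (A₁,…,A_m, C, D, B₁,…,B_m)`. -/
inductive Lbl (m : ℕ) where
  | A (i : Fin m)
  | C
  | D
  | B (i : Fin m)
  deriving DecidableEq, Fintype

/-- A partition of the `n` nodes into blocks `A₁,…,A_m` of `k−3` nodes each, core sets `C` and
`D` of `k` nodes each, and blocks `B₁,…,B_m` of `2(k−3)` nodes each, encoded as a labelling. -/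
def IsPartition (n k m : ℕ) (f : Fin n → Lbl m) : Prop :=
  (∀ i, {v | f v = Lbl.A i}.ncard = k - 3) ∧
  ({v | f v = Lbl.C}.ncard = k) ∧
  ({v | f v = Lbl.D}.ncard = k) ∧
  (∀ i, {v | f v = Lbl.B i}.ncard = 2 * (k - 3))

def Cset {n m : ℕ} (f : Fin n → Lbl m) : Set (Fin n) := {v | f v = Lbl.C}

def Aset {n m : ℕ} (f : Fin n → Lbl m) (i : Fin m) : Set (Fin n) := {v | f v = Lbl.A i}

/-- A node lies in `C ∪ D`. -/
def inCD {n m : ℕ} (f : Fin n → Lbl m) (v : Fin n) : Prop := f v = Lbl.C ∨ f v = Lbl.D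

/-- `e ∈ E(T)`: the edge runs inside some `A_i`, inside `C ∪ D`, or inside some `B_i`. -/
def allowedEdge {n m : ℕ} (f : Fin n → Lbl m) (e : Edge n) : Prop :=
  ∃ a b : Fin n, e = s(a, b) ∧
    ((∃ i, f a = Lbl.A i ∧ f b = Lbl.A i) ∨ (inCD f a ∧ inCD f b) ∨
      (∃ i, f a = Lbl.B i ∧ f b = Lbl.B i))

/-- `e ∈ C × D`: the edge runs between `C` and `D`. -/
def betweenCD {n m : ℕ} (f : Fin n → Lbl m) (e : Edge n) : Prop :=
  ∃ a b : Fin n, e = s(a, b) ∧ f a = Lbl.C ∧ f b = Lbl.D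

/-- `e ∈ E(C ∪ D)`: the edge runs inside `C ∪ D`. -/
def insideCD {n m : ℕ} (f : Fin n → Lbl m) (e : Edge n) : Prop :=
  ∃ a b : Fin n, e = s(a, b) ∧ inCD f a ∧ inCD f b

/-- `𝓜_all(T)`: the perfect matchings respecting the partition. -/
def MallT {n m : ℕ} (f : Fin n → Lbl m) : Set (Finset (Edge n)) :=
  {M | IsPM M ∧ ∀ e ∈ M, allowedEdge f e}

/-- `𝓤_all(T)`: the `t`-node cuts `U ⊆ A ∪ C` containing all or none of the nodes of each
block `A_i`. -/
def UallT {n m : ℕ} (t : ℕ) (f : Fin n → Lbl m) : Set (Finset (Fin n)) :=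
  {U | U.card = t ∧ (∀ v ∈ U, (∃ i, f v = Lbl.A i) ∨ f v = Lbl.C) ∧
    ∀ i, Disjoint (U : Set (Fin n)) (Aset f i) ∨ Aset f i ⊆ (U : Set (Fin n))}

/-- `V(H)`: the nodes incident to the edges of `H`. -/
def VSet {n : ℕ} (H : Finset (Edge n)) : Set (Fin n) := {v | ∃ e ∈ H, v ∈ e}

/-- `p_{M,T}(H)`: the probability that a uniformly random `M ∈ 𝓜_all(T)` with `H ⊆ M`
lies in `𝓜`. -/
noncomputable def pM {n m : ℕ} (f : Fin n → Lbl m) (Mm : Set (Finset (Edge n)))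
    (H : Finset (Edge n)) : ℝ :=
  ({M | M ∈ MallT f ∧ H ⊆ M ∧ M ∈ Mm}.ncard : ℝ) /
    ({M | M ∈ MallT f ∧ H ⊆ M}.ncard : ℝ)

/-- `p^ex_{M,T}(H)`: the probability that a uniformly random `M ∈ 𝓜_all(T)` with
`M ∩ δ(C) = H` lies in `𝓜`. -/
noncomputable def pMex {n m : ℕ} (f : Fin n → Lbl m) (Mm : Set (Finset (Edge n)))
    (H : Finset (Edge n)) : ℝ :=
  ({M | M ∈ MallT f ∧ M.filter (· ∈ cutSet (Cset f)) = H ∧ M ∈ Mm}.ncard : ℝ) /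
    ({M | M ∈ MallT f ∧ M.filter (· ∈ cutSet (Cset f)) = H}.ncard : ℝ)

/-- `p_{U,T}(c)`: the probability that a uniformly random `U ∈ 𝓤_all(T)` with `c ⊆ U`
lies in `𝓤`. -/
noncomputable def pU {n m : ℕ} (t : ℕ) (f : Fin n → Lbl m) (Uu : Set (Finset (Fin n)))
    (c : Set (Fin n)) : ℝ :=
  ({U | U ∈ UallT t f ∧ c ⊆ (U : Set (Fin n)) ∧ U ∈ Uu}.ncard : ℝ) /
    ({U | U ∈ UallT t f ∧ c ⊆ (U : Set (Fin n))}.ncard : ℝ)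

/-- `p^ex_{U,T}(c)`: the probability that a uniformly random `U ∈ 𝓤_all(T)` with `U ∩ C = c`
lies in `𝓤`. -/
noncomputable def pUexSet {n m : ℕ} (t : ℕ) (f : Fin n → Lbl m) (Uu : Set (Finset (Fin n)))
    (c : Set (Fin n)) : ℝ :=
  ({U | U ∈ UallT t f ∧ (U : Set (Fin n)) ∩ Cset f = c ∧ U ∈ Uu}.ncard : ℝ) /
    ({U | U ∈ UallT t f ∧ (U : Set (Fin n)) ∩ Cset f = c}.ncard : ℝ)

/-- `p^ex_{U,T}(H) := p^ex_{U,T}(V(H) ∩ C)` for a matching `H ⊆ C × D`. -/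
noncomputable def pUexH {n m : ℕ} (t : ℕ) (f : Fin n → Lbl m) (Uu : Set (Finset (Fin n)))
    (H : Finset (Edge n)) : ℝ :=
  pUexSet t f Uu (VSet H ∩ Cset f)

/-- `H` is an `ℓ`-matching in the complete bipartite graph between `C` and `D`. -/
def IsCDMatching {n m : ℕ} (f : Fin n → Lbl m) (ℓ : ℕ) (H : Finset (Edge n)) : Prop :=
  IsMatching H ∧ H.card = ℓ ∧ ∀ e ∈ H, betweenCD f e

/-- `(T,H)` is `M`-good: `0 < (1/(1+ε))·p_{M,T}(H)` and every `k`-matching `F` with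
`H ⊆ F ⊆ E(C ∪ D)` satisfies `(1/(1+ε))·p_{M,T}(H) ≤ p_{M,T}(F) ≤ (1+ε)·p_{M,T}(H)`. -/
def MGood {n m : ℕ} (ε : ℝ) (k : ℕ) (f : Fin n → Lbl m) (Mm : Set (Finset (Edge n)))
    (H : Finset (Edge n)) : Prop :=
  0 < (1 / (1 + ε)) * pM f Mm H ∧
  ∀ F : Finset (Edge n), IsMatching F → F.card = k → H ⊆ F → (∀ e ∈ F, insideCD f e) →
    (1 / (1 + ε)) * pM f Mm H ≤ pM f Mm F ∧ pM f Mm F ≤ (1 + ε) * pM f Mm H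

/-- `(T,H)` is `U`-good:
`0 < (1/(1+ε))·p^ex_{U,T}(H) ≤ p^ex_{U,T}(C) ≤ (1+ε)·p^ex_{U,T}(H)`. -/
def UGood {n m : ℕ} (ε : ℝ) (t : ℕ) (f : Fin n → Lbl m) (Uu : Set (Finset (Fin n)))
    (H : Finset (Edge n)) : Prop :=
  0 < (1 / (1 + ε)) * pUexH t f Uu H ∧
  (1 / (1 + ε)) * pUexH t f Uu H ≤ pUexSet t f Uu (Cset f) ∧
  pUexSet t f Uu (Cset f) ≤ (1 + ε) * pUexH t f Uu H

/-- `(T,H)` is good: both `M`-good and `U`-good. -/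
def Good {n m : ℕ} (ε : ℝ) (k t : ℕ) (f : Fin n → Lbl m)
    (Mm : Set (Finset (Edge n))) (Uu : Set (Finset (Fin n))) (H : Finset (Edge n)) : Prop :=
  MGood ε k f Mm H ∧ UGood ε t f Uu H

/-- `(T,H)` is small: `p^ex_{M,T}(H) ≤ 2^{−δm}` or `p^ex_{U,T}(H) ≤ 2^{−δm}`. -/
def Small {n m : ℕ} (δ : ℝ) (t : ℕ) (f : Fin n → Lbl m)
    (Mm : Set (Finset (Edge n))) (Uu : Set (Finset (Fin n))) (H : Finset (Edge n)) : Prop :=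
  pMex f Mm H ≤ (2 : ℝ) ^ (-(δ * (m : ℝ))) ∨ pUexH t f Uu H ≤ (2 : ℝ) ^ (-(δ * (m : ℝ)))

/-- `(T,H)` is bad: neither good nor small. -/
def Bad {n m : ℕ} (ε δ : ℝ) (k t : ℕ) (f : Fin n → Lbl m)
    (Mm : Set (Finset (Edge n))) (Uu : Set (Finset (Fin n))) (H : Finset (Edge n)) : Prop :=
  ¬ Good ε k t f Mm Uu H ∧ ¬ Small δ t f Mm Uu H

/-- `(T,H)` is `U`-bad: neither `U`-good nor small. -/
def UBad {n m : ℕ} (ε δ : ℝ) (t : ℕ) (f : Fin n → Lbl m)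
    (Mm : Set (Finset (Edge n))) (Uu : Set (Finset (Fin n))) (H : Finset (Edge n)) : Prop :=
  ¬ UGood ε t f Uu H ∧ ¬ Small δ t f Mm Uu H

/-- `𝒫(U,M)`: the partitions `T` compatible with the pair `(U, M)`, i.e. `U ∈ 𝓤_all(T)` with
`U ∩ C = V(H) ∩ C` and `M ∈ 𝓜_all(T)` with `M ∩ (C × D) = H`, where `H = δ(U) ∩ M`. -/
def PSet (n k m t : ℕ) (U : Finset (Fin n)) (M H : Finset (Edge n)) :
    Set (Fin n → Lbl m) :=
  {f | IsPartition n k m f ∧ U ∈ UallT t f ∧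
    (U : Set (Fin n)) ∩ Cset f = VSet H ∩ Cset f ∧
    M ∈ MallT f ∧ M.filter (betweenCD f) = H}

/-- Expectation of `g` over a uniformly random partition `T`. -/
noncomputable def expPart (n k m : ℕ) (g : (Fin n → Lbl m) → ℝ) : ℝ :=
  (∑ f ∈ Finset.univ.filter (fun f => IsPartition n k m f), g f) /
    ((Finset.univ.filter (fun f => IsPartition n k m f)).card : ℝ)

/-- Expectation of `g` over a uniformly random 3-matching `H` in the complete bipartite graph
between `C` and `D`. -/
noncomputable def expH3 {n m : ℕ} (f : Fin n → Lbl m) (g : Finset (Edge n) → ℝ) : ℝ :=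
  (∑ H ∈ Finset.univ.filter (fun H => IsCDMatching f 3 H), g H) /
    ((Finset.univ.filter (fun H => IsCDMatching f 3 H)).card : ℝ)

/-! Suppose `|H ∩ H*| ≤ 1`. `U`-goodness of `H` gives a cut `U ∈ 𝓤 ∩ 𝓤_all(T)` with
`U ∩ C = S := V(H) ∩ C`. Complete `H*` to a perfect matching `F'` of `C ∪ D`: the edges of
`H*` crossing `S` are those of `H ∩ H*`, and the nodes of `C ∪ D` not covered by `H*`,
`|H \ H*|` of which lie in `S`, can be paired using one crossing edge if that number is odd
and none if it is even. As `|H| = 3`, exactly one edge of `F'` crosses `S`. `M`-goodness of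
`H*` gives `M ∈ 𝓜 ∩ 𝓜_all(T)` containing `F'`. Since `U` takes all or none of each `A_i` and
avoids the `B_i`, `δ(U) ∩ M = δ(S) ∩ F'` is that single edge, so `(U, M) ∈ 𝓡 ∩ Q₁`,
contradicting `μ₁(𝓡) = 0`. -/

open Finset

theorem nonempty_of_ncard_div_ne_zero {α : Type*} {S T : Set α}
    (h : (S.ncard : ℝ) / T.ncard ≠ 0) : S.Nonempty :=
  Set.nonempty_of_ncard_ne_zero fun h0 => h (by simp [h0])

theorem mu_pos_of_mem {n t ℓ : ℕ} {R : Set (Finset (Fin n) × Finset (Edge n))}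
    {p : Finset (Fin n) × Finset (Edge n)} (hp : p ∈ R ∩ Qset n t ℓ) : 0 < mu n t ℓ R :=
  div_pos (mod_cast (Set.ncard_pos (Set.toFinite _)).2 ⟨p, hp⟩)
    (mod_cast (Set.ncard_pos (Set.toFinite _)).2 ⟨p, hp.2⟩)

section Matchings

variable {n : ℕ}

theorem mk_mem_cutSet_iff {S : Set (Fin n)} {a b : Fin n} :
    s(a, b) ∈ cutSet S ↔ a ∈ S ∧ b ∉ S ∨ b ∈ S ∧ a ∉ S := by
  constructor
  · rintro ⟨x, y, h, hx, hy⟩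
    rcases Sym2.eq_iff.mp h with ⟨rfl, rfl⟩ | ⟨rfl, rfl⟩ <;> tauto
  · rintro (⟨ha, hb⟩ | ⟨hb, ha⟩)
    · exact ⟨a, b, rfl, ha, hb⟩
    · exact ⟨b, a, Sym2.eq_swap, hb, ha⟩

theorem mem_cutSet_iff_of_forall_mem_iff {S T : Set (Fin n)} {e : Edge n}
    (h : ∀ v ∈ e, v ∈ S ↔ v ∈ T) : e ∈ cutSet S ↔ e ∈ cutSet T := by
  induction e using Sym2.ind with
  | _ a b =>
    simp only [mk_mem_cutSet_iff, h a (Sym2.mem_mk_left a b), h b (Sym2.mem_mk_right a b)]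

theorem IsMatching.subset {M N : Finset (Edge n)} (hM : IsMatching M) (h : N ⊆ M) :
    IsMatching N :=
  ⟨fun e he => hM.1 e (h he), fun e he g hg => hM.2 e (h he) g (h hg)⟩

theorem IsMatching.eq_of_mem {M : Finset (Edge n)} (hM : IsMatching M) {e g : Edge n}
    (he : e ∈ M) (hg : g ∈ M) {v : Fin n} (hve : v ∈ e) (hvg : v ∈ g) : e = g := by
  by_contra hne
  exact hM.2 e he g hg hne v hve hvg

theorem IsMatching.mem_of_mem_vSet {M N : Finset (Edge n)} (hM : IsMatching M) (hNM : N ⊆ M)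
    {e : Edge n} (he : e ∈ M) {v : Fin n} (hve : v ∈ e) (hvN : v ∈ VSet N) : e ∈ N := by
  obtain ⟨g, hg, hvg⟩ := hvN
  rwa [hM.eq_of_mem he (hNM hg) hve hvg]

theorem IsMatching.vSet_sdiff {F H H' : Finset (Edge n)} (hF : IsMatching F) (hHF : H ⊆ F)
    (hH'F : H' ⊆ F) : VSet (H \ H') = VSet H \ VSet H' := by
  ext v
  constructor
  · rintro ⟨e, he, hve⟩
    rw [mem_sdiff] at he
    exact ⟨⟨e, he.1, hve⟩, fun hv => he.2 (hF.mem_of_mem_vSet hH'F (hHF he.1) hve hv)⟩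
  · rintro ⟨⟨e, he, hve⟩, hv⟩
    exact ⟨e, mem_sdiff.2 ⟨he, fun he' => hv ⟨e, he', hve⟩⟩, hve⟩

theorem IsMatching.card_filter_mem_vSet {P : Finset (Edge n)} (hP : IsMatching P)
    (s : Finset (Fin n)) :
    (s.filter (· ∈ VSet P)).card = ∑ e ∈ P, (s.filter (· ∈ e)).card := by
  have hs : s.filter (· ∈ VSet P) = P.biUnion fun e => s.filter (· ∈ e) := by
    ext v
    simp only [mem_filter, mem_biUnion]
    exact ⟨fun ⟨hv, e, he, hve⟩ => ⟨e, he, hv, hve⟩,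
      fun ⟨e, he, hv, hve⟩ => ⟨hv, e, he, hve⟩⟩
  rw [hs, card_biUnion]
  intro e he g hg hne
  simp only [Function.onFun, disjoint_left, mem_filter]
  exact fun v hve hvg => hP.2 e he g hg hne v hve.2 hvg.2

def IsPerfectMatchingOn (P : Finset (Edge n)) (s : Finset (Fin n)) : Prop :=
  IsMatching P ∧ VSet P = ↑s

namespace IsPerfectMatchingOn

variable {P Q : Finset (Edge n)} {s t : Finset (Fin n)}

theorem mem_of_mem (hP : IsPerfectMatchingOn P s) {e : Edge n} (he : e ∈ P) {v : Fin n}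
    (hv : v ∈ e) : v ∈ s :=
  mem_coe.mp (hP.2 ▸ ⟨e, he, hv⟩)

theorem two_mul_card (hP : IsPerfectMatchingOn P s) : 2 * P.card = s.card := by
  have hs : s.filter (· ∈ VSet P) = s := filter_true_of_mem fun v hv => by simpa [hP.2] using hv
  rw [← hs, hP.1.card_filter_mem_vSet, mul_comm, ← smul_eq_mul, ← sum_const]
  refine sum_congr rfl fun e he => ?_
  induction e using Sym2.ind with
  | _ a b =>
    have hab : a ≠ b := by simpa [Sym2.mk_isDiag_iff] using hP.1.1 _ he
    have hfib : s.filter (· ∈ s(a, b)) = {a, b} := by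
      ext v
      simp only [mem_filter, Sym2.mem_iff, mem_insert, mem_singleton]
      constructor
      · exact And.right
      · rintro (rfl | rfl)
        exacts [⟨hP.mem_of_mem he (Sym2.mem_mk_left _ _), .inl rfl⟩,
          ⟨hP.mem_of_mem he (Sym2.mem_mk_right _ _), .inr rfl⟩]
    rw [hfib, card_pair hab]

theorem union (hP : IsPerfectMatchingOn P s) (hQ : IsPerfectMatchingOn Q t)
    (hst : Disjoint s t) : IsPerfectMatchingOn (P ∪ Q) (s ∪ t) := by
  have hPQ : ∀ e ∈ P, ∀ g ∈ Q, ∀ v, v ∈ e → v ∉ g := fun e he g hg v hve hvg =>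
    disjoint_left.mp hst (hP.mem_of_mem he hve) (hQ.mem_of_mem hg hvg)
  refine ⟨⟨fun e he => ?_, fun e he g hg hne v hve => ?_⟩, ?_⟩
  · rcases mem_union.mp he with he | he
    exacts [hP.1.1 e he, hQ.1.1 e he]
  · rcases mem_union.mp he with he | he <;> rcases mem_union.mp hg with hg | hg
    · exact hP.1.2 e he g hg hne v hve
    · exact hPQ e he g hg v hve
    · exact fun hvg => hPQ g hg e he v hvg hve
    · exact hQ.1.2 e he g hg hne v hve
  · ext v
    simp only [VSet, mem_union, Set.mem_ofPred_eq, coe_union, Set.mem_union, ← hP.2, ← hQ.2]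
    constructor
    · rintro ⟨e, he | he, hve⟩
      exacts [.inl ⟨e, he, hve⟩, .inr ⟨e, he, hve⟩]
    · rintro (⟨e, he, hve⟩ | ⟨e, he, hve⟩)
      exacts [⟨e, .inl he, hve⟩, ⟨e, .inr he, hve⟩]

theorem disjoint (hP : IsPerfectMatchingOn P s) (hQ : IsPerfectMatchingOn Q t)
    (hst : Disjoint s t) : Disjoint P Q := by
  refine disjoint_left.mpr fun e heP heQ => ?_
  induction e using Sym2.ind with
  | _ a b =>
    exact disjoint_left.mp hst (hP.mem_of_mem heP (Sym2.mem_mk_left a b))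
      (hQ.mem_of_mem heQ (Sym2.mem_mk_left a b))

theorem filter_mem_cutSet_eq_empty (hP : IsPerfectMatchingOn P s) {S : Set (Fin n)}
    (hs : ∀ v ∈ s, ∀ w ∈ s, v ∈ S ↔ w ∈ S) : P.filter (· ∈ cutSet S) = ∅ := by
  refine filter_false_of_mem fun e he => ?_
  induction e using Sym2.ind with
  | _ a b =>
    have := hs a (hP.mem_of_mem he (Sym2.mem_mk_left a b)) b
      (hP.mem_of_mem he (Sym2.mem_mk_right a b))
    rw [mk_mem_cutSet_iff]
    tauto

end IsPerfectMatchingOn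

theorem isPerfectMatchingOn_empty : IsPerfectMatchingOn (∅ : Finset (Edge n)) ∅ :=
  ⟨⟨by simp, by simp⟩, by simp [VSet]⟩

theorem isPerfectMatchingOn_pair {a b : Fin n} (hab : a ≠ b) :
    IsPerfectMatchingOn {s(a, b)} {a, b} := by
  refine ⟨⟨?_, ?_⟩, ?_⟩
  · simpa [Sym2.mk_isDiag_iff] using hab
  · simp
  · ext v
    simp [VSet]

theorem card_erase_erase_add_two {s : Finset (Fin n)} {x y : Fin n} (hx : x ∈ s) (hy : y ∈ s)
    (hxy : x ≠ y) : ((s.erase x).erase y).card + 2 = s.card := by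
  rw [card_erase_of_mem (mem_erase.mpr ⟨hxy.symm, hy⟩), card_erase_of_mem hx]
  have := card_pos.mpr ⟨x, hx⟩
  have := card_pos.mpr ⟨y, mem_erase.mpr ⟨hxy.symm, hy⟩⟩
  rw [card_erase_of_mem hx] at this
  omega

theorem IsPerfectMatchingOn.pair_union {P : Finset (Edge n)} {s : Finset (Fin n)} {x y : Fin n}
    (hP : IsPerfectMatchingOn P ((s.erase x).erase y)) (hx : x ∈ s) (hy : y ∈ s)
    (hxy : x ≠ y) :
    IsPerfectMatchingOn ({s(x, y)} ∪ P) s := by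
  have hs : s = {x, y} ∪ (s.erase x).erase y := by
    ext v
    simp only [mem_union, mem_insert, mem_singleton, mem_erase]
    constructor
    · intro hv
      tauto
    · rintro ((rfl | rfl) | ⟨-, -, hv⟩)
      exacts [hx, hy, hv]
  rw [hs]
  refine (isPerfectMatchingOn_pair hxy).union hP ?_
  simp only [disjoint_insert_left, disjoint_singleton_left, mem_erase]
  tauto

theorem exists_isPerfectMatchingOn {s : Finset (Fin n)} (hs : Even s.card) :
    ∃ P, IsPerfectMatchingOn P s := by
  induction s using Finset.strongInduction with
  | _ s ih =>
  rcases s.eq_empty_or_nonempty with rfl | ⟨x, hx⟩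
  · exact ⟨∅, isPerfectMatchingOn_empty⟩
  obtain ⟨y, hy⟩ : (s.erase x).Nonempty := by
    rw [← card_pos, card_erase_of_mem hx]
    obtain ⟨j, hj⟩ := hs
    have := card_pos.mpr ⟨x, hx⟩
    omega
  have hxy : x ≠ y := (ne_of_mem_erase hy).symm
  have hcard := card_erase_erase_add_two hx (mem_of_mem_erase hy) hxy
  obtain ⟨P, hP⟩ := ih _ ((erase_subset _ _).trans_ssubset (erase_ssubset hx))
    ((Nat.even_add.mp (hcard ▸ hs)).mpr even_two)
  exact ⟨_, hP.pair_union hx (mem_of_mem_erase hy) hxy⟩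

theorem exists_isPerfectMatchingOn_filter_mem_cutSet_eq_empty {s : Finset (Fin n)}
    (hs : Even s.card) {S : Set (Fin n)} (hsS : Even (s.filter (· ∈ S)).card) :
    ∃ P, IsPerfectMatchingOn P s ∧ P.filter (· ∈ cutSet S) = ∅ := by
  rw [← card_filter_add_card_filter_not (· ∈ S)] at hs
  obtain ⟨Pin, hPin⟩ := exists_isPerfectMatchingOn hsS
  obtain ⟨Pout, hPout⟩ := exists_isPerfectMatchingOn ((Nat.even_add.mp hs).mp hsS)
  refine ⟨Pin ∪ Pout, filter_union_filter_not_eq (· ∈ S) s ▸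
    hPin.union hPout (disjoint_filter_filter_not s s _), ?_⟩
  rw [filter_union, hPin.filter_mem_cutSet_eq_empty, hPout.filter_mem_cutSet_eq_empty, union_empty]
  · exact fun v hv w hw => iff_of_false (mem_filter.mp hv).2 (mem_filter.mp hw).2
  · exact fun v hv w hw => iff_of_true (mem_filter.mp hv).2 (mem_filter.mp hw).2

/-- If `|s ∩ S|` is odd, join some `x ∈ s ∩ S` to some `y ∈ s \ S` and pair the rest without
crossing `S`. -/
theorem exists_isPerfectMatchingOn_card_filter_mem_cutSet {s : Finset (Fin n)}
    (hs : Even s.card) (S : Set (Fin n)) :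
    ∃ P, IsPerfectMatchingOn P s ∧
      (P.filter (· ∈ cutSet S)).card = (s.filter (· ∈ S)).card % 2 := by
  rcases Nat.even_or_odd (s.filter (· ∈ S)).card with hsS | hsS
  · obtain ⟨P, hP, hPS⟩ := exists_isPerfectMatchingOn_filter_mem_cutSet_eq_empty hs hsS
    exact ⟨P, hP, by rw [hPS, Nat.even_iff.mp hsS, card_empty]⟩
  obtain ⟨x, hx⟩ := card_pos.mp hsS.pos
  obtain ⟨y, hy⟩ : (s.filter (· ∉ S)).Nonempty := by
    rw [← card_pos, Nat.pos_iff_ne_zero]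
    intro h0
    rw [← card_filter_add_card_filter_not (· ∈ S), h0, add_zero] at hs
    exact Nat.not_even_iff_odd.mpr hsS hs
  have hxy : x ≠ y := fun h => (mem_filter.mp hy).2 (h ▸ (mem_filter.mp hx).2)
  rw [mem_filter] at hx hy
  have hcard := card_erase_erase_add_two hx.1 hy.1 hxy
  have hcardS :
      (((s.erase x).erase y).filter (· ∈ S)).card + 1 = (s.filter (· ∈ S)).card := by
    rw [filter_erase, filter_erase,
      erase_eq_of_notMem fun h => hy.2 (mem_filter.mp (mem_of_mem_erase h)).2,
      card_erase_add_one (mem_filter.mpr hx)]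
  obtain ⟨P, hP, hPS⟩ := exists_isPerfectMatchingOn_filter_mem_cutSet_eq_empty (S := S)
    ((Nat.even_add.mp (hcard ▸ hs)).mpr even_two)
    (by obtain ⟨j, hj⟩ := hsS; exact ⟨j, by omega⟩)
  refine ⟨{s(x, y)} ∪ P, hP.pair_union hx.1 hy.1 hxy, ?_⟩
  rw [filter_union, hPS, union_empty, filter_singleton,
    if_pos (mk_mem_cutSet_iff.mpr (.inl ⟨hx.2, hy.2⟩)), Nat.odd_iff.mp hsS, card_singleton]

end Matchings

section Partition

variable {n m : ℕ} {f : Fin n → Lbl m}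

theorem card_filter_inCD {k : ℕ} (hf : IsPartition n k m f) :
    (univ.filter (inCD f)).card = 2 * k := by
  have hCD : (↑(univ.filter (inCD f)) : Set (Fin n)) =
      {v | f v = Lbl.C} ∪ {v | f v = Lbl.D} := by
    ext v
    simp [inCD]
  rw [← Set.ncard_coe_finset, hCD, Set.ncard_union_eq ?_, hf.2.1, hf.2.2.1, two_mul]
  exact Set.disjoint_left.mpr fun v (hC : f v = _) (hD : f v = _) => by simp [hC] at hD

theorem IsPerfectMatchingOn.insideCD {P : Finset (Edge n)}
    (hP : IsPerfectMatchingOn P (univ.filter (inCD f))) {e : Edge n} (he : e ∈ P) :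
    insideCD f e := by
  induction e using Sym2.ind with
  | _ a b =>
    exact ⟨a, b, rfl, (mem_filter.mp (hP.mem_of_mem he (Sym2.mem_mk_left a b))).2,
      (mem_filter.mp (hP.mem_of_mem he (Sym2.mem_mk_right a b))).2⟩

theorem inCD_of_mem_vSet {G : Finset (Edge n)} (hG : ∀ e ∈ G, betweenCD f e) {v : Fin n}
    (hv : v ∈ VSet G) : inCD f v := by
  obtain ⟨e, he, hve⟩ := hv
  obtain ⟨a, b, rfl, ha, hb⟩ := hG e he
  rcases Sym2.mem_iff.mp hve with rfl | rfl
  exacts [.inl ha, .inr hb]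

theorem card_filter_mem_vSet_inter_Cset {G : Finset (Edge n)} (hG : IsMatching G)
    (hGCD : ∀ e ∈ G, betweenCD f e) :
    (univ.filter (· ∈ VSet G ∩ Cset f)).card = G.card := by
  have hfilter : univ.filter (· ∈ VSet G ∩ Cset f) =
      (univ.filter (· ∈ Cset f)).filter (· ∈ VSet G) := by
    ext v
    simp [and_comm]
  rw [hfilter, hG.card_filter_mem_vSet, card_eq_sum_ones]
  refine sum_congr rfl fun e he => card_eq_one.mpr ?_
  obtain ⟨a, b, rfl, ha, hb⟩ := hGCD e he
  refine ⟨a, ext fun v => ?_⟩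
  simp only [mem_filter, mem_univ, true_and, Sym2.mem_iff, mem_singleton]
  constructor
  · rintro ⟨hv, hva | hvb⟩
    · exact hva
    · change f v = Lbl.C at hv
      simp [hvb, hb] at hv
  · intro hva
    rw [hva]
    exact ⟨(ha : a ∈ Cset f), .inl rfl⟩

theorem filter_mem_cutSet_vSet_inter_Cset {F H H' : Finset (Edge n)} (hF : IsMatching F)
    (hFCD : ∀ e ∈ F, betweenCD f e) (hHF : H ⊆ F) (hH'F : H' ⊆ F) :
    H'.filter (· ∈ cutSet (VSet H ∩ Cset f)) = H ∩ H' := by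
  rw [inter_comm, ← filter_mem_eq_inter]
  refine filter_congr fun e he => ?_
  obtain ⟨a, b, rfl, ha, hb⟩ := hFCD e (hH'F he)
  have hbS : b ∉ VSet H ∩ Cset f := fun h => by simp [Cset, hb] at h
  rw [mk_mem_cutSet_iff]
  constructor
  · rintro (⟨haS, -⟩ | ⟨hbS', -⟩)
    · exact hF.mem_of_mem_vSet hHF (hH'F he) (Sym2.mem_mk_left a b) haS.1
    · exact absurd hbS' hbS
  · exact fun heH => .inl ⟨⟨⟨_, heH, Sym2.mem_mk_left a b⟩, ha⟩, hbS⟩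

theorem exists_isPerfectMatchingOn_inCD_card_filter_mem_cutSet {F H H' : Finset (Edge n)}
    (hCD : Even (univ.filter (inCD f)).card) (hF : IsMatching F)
    (hFCD : ∀ e ∈ F, betweenCD f e) (hHF : H ⊆ F) (hH'F : H' ⊆ F) :
    ∃ F', IsPerfectMatchingOn F' (univ.filter (inCD f)) ∧ H' ⊆ F' ∧
      (F'.filter (· ∈ cutSet (VSet H ∩ Cset f))).card =
        (H ∩ H').card + (H \ H').card % 2 := by
  set CD := univ.filter (inCD f)
  have hH' : IsPerfectMatchingOn H' (CD.filter (· ∈ VSet H')) := by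
    refine ⟨hF.subset hH'F, Set.ext fun v => ?_⟩
    simp only [CD, coe_filter, mem_filter, mem_univ, true_and, Set.mem_ofPred_eq]
    exact ⟨fun hv => ⟨inCD_of_mem_vSet (fun e he => hFCD e (hH'F he)) hv, hv⟩, And.right⟩
  have hdisj : Disjoint (CD.filter (· ∈ VSet H')) (CD.filter (· ∉ VSet H')) :=
    disjoint_filter_filter_not _ _ _
  have hrest : Even (CD.filter (· ∉ VSet H')).card := by
    rw [← card_filter_add_card_filter_not (· ∈ VSet H'), ← hH'.two_mul_card] at hCD
    exact (Nat.even_add.mp hCD).mp (even_two_mul _)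
  obtain ⟨P, hP, hPcut⟩ :=
    exists_isPerfectMatchingOn_card_filter_mem_cutSet hrest (VSet H ∩ Cset f)
  refine ⟨H' ∪ P, filter_union_filter_not_eq (· ∈ VSet H') CD ▸ hH'.union hP hdisj,
    subset_union_left, ?_⟩
  rw [filter_union, card_union_of_disjoint (disjoint_filter_filter (hH'.disjoint hP hdisj)),
    filter_mem_cutSet_vSet_inter_Cset hF hFCD hHF hH'F, hPcut,
    ← card_filter_mem_vSet_inter_Cset (hF.subset (sdiff_subset.trans hHF))
      fun e he => hFCD e (hHF (mem_sdiff.mp he).1)]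
  congr 3
  ext v
  simp only [CD, mem_filter, mem_univ, true_and, hF.vSet_sdiff hHF hH'F, Set.mem_inter_iff,
    Set.mem_sdiff]
  exact ⟨fun ⟨⟨_, hvH'⟩, hvH, hvC⟩ => ⟨⟨hvH, hvH'⟩, hvC⟩,
    fun ⟨⟨hvH, hvH'⟩, hvC⟩ => ⟨⟨.inl hvC, hvH'⟩, hvH, hvC⟩⟩

theorem exists_inCD_of_mem_cutSet {t : ℕ} {U : Finset (Fin n)} {e : Edge n}
    (hU : U ∈ UallT t f) (he : allowedEdge f e) (hcut : e ∈ cutSet (U : Set (Fin n))) :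
    ∃ v ∈ e, inCD f v := by
  obtain ⟨a, b, rfl, hab⟩ := he
  rw [mk_mem_cutSet_iff] at hcut
  rcases hab with ⟨i, ha, hb⟩ | ⟨ha, -⟩ | ⟨i, ha, hb⟩
  · have : a ∈ U ↔ b ∈ U := by
      rcases hU.2.2 i with hdis | hsub
      · exact iff_of_false (fun h => Set.disjoint_left.mp hdis h ha)
          (fun h => Set.disjoint_left.mp hdis h hb)
      · exact iff_of_true (hsub ha) (hsub hb)
    simp only [mem_coe] at hcut
    tauto
  · exact ⟨a, Sym2.mem_mk_left a b, ha⟩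
  · have hB : ∀ v, f v = Lbl.B i → v ∉ U := fun v hv hvU => by
      rcases hU.2.1 v hvU with ⟨j, hj⟩ | hj <;> simp [hv] at hj
    simp only [mem_coe] at hcut
    have := hB a ha
    have := hB b hb
    tauto

/-- Only edges of `C ∪ D` in `M ∈ 𝓜_all(T)` can cross `U ∈ 𝓤_all(T)`, and on `C ∪ D` the cut
`U` is `S`. -/
theorem coe_inter_cutSet_eq_filter {t : ℕ} {U : Finset (Fin n)} {S : Set (Fin n)}
    {M F' : Finset (Edge n)} (hU : U ∈ UallT t f) (hUC : ↑U ∩ Cset f = S) (hM : M ∈ MallT f)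
    (hF' : IsPerfectMatchingOn F' (univ.filter (inCD f))) (hF'M : F' ⊆ M) :
    ↑M ∩ cutSet ↑U = (↑(F'.filter (· ∈ cutSet S)) : Set (Edge n)) := by
  have hUS : ∀ v, inCD f v → (v ∈ (U : Set (Fin n)) ↔ v ∈ S) := by
    rintro v (hv | hv)
    · rw [← hUC]
      exact ⟨fun h => ⟨h, hv⟩, And.left⟩
    · refine iff_of_false (fun hvU => ?_) (fun hvS => ?_)
      · rcases hU.2.1 v hvU with ⟨i, hi⟩ | hi <;> simp [hv] at hi
      · rw [← hUC] at hvS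
        exact absurd (hv.symm.trans hvS.2) (by simp)
  have hcut : ∀ e ∈ F', e ∈ cutSet ↑U ↔ e ∈ cutSet S := fun e he =>
    mem_cutSet_iff_of_forall_mem_iff fun w hw => hUS w (mem_filter.mp (hF'.mem_of_mem he hw)).2
  ext e
  simp only [Set.mem_inter_iff, mem_coe, coe_filter, Set.mem_ofPred_eq]
  constructor
  · rintro ⟨heM, heU⟩
    obtain ⟨v, hve, hv⟩ := exists_inCD_of_mem_cutSet hU (hM.2 e heM) heU
    have heF' := hM.1.1.mem_of_mem_vSet hF'M heM hve (by rw [hF'.2]; simpa using hv)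
    exact ⟨heF', (hcut e heF').mp heU⟩
  · rintro ⟨heF', heS⟩
    exact ⟨hF'M heF', (hcut e heF').mpr heS⟩

end Partition

theorem good_3subsets_overlap_general (k m : ℕ) (ε : ℝ)
    (Uu : Set (Finset (Fin (npar k m)))) (Mm : Set (Finset (Edge (npar k m))))
    (hmu1 : mu (npar k m) (tpar k m) 1 (Uu ×ˢ Mm) = 0)
    (f : Fin (npar k m) → Lbl m) (hf : IsPartition (npar k m) k m f)
    (F : Finset (Edge (npar k m))) (hF : IsCDMatching f k F)
    (H Hs : Finset (Edge (npar k m)))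
    (hHF : H ⊆ F) (hH3 : H.card = 3) (hHsF : Hs ⊆ F)
    (hgoodH : Good ε k (tpar k m) f Mm Uu H)
    (hgoodHs : Good ε k (tpar k m) f Mm Uu Hs) :
    2 ≤ (H ∩ Hs).card := by
  by_contra! hlt
  obtain ⟨U, hU, hUC, hUu⟩ :=
    nonempty_of_ncard_div_ne_zero (right_ne_zero_of_mul hgoodH.2.1.ne')
  obtain ⟨F', hF', hHsF', hcross⟩ := exists_isPerfectMatchingOn_inCD_card_filter_mem_cutSet
    (card_filter_inCD hf ▸ even_two_mul k) hF.1 hF.2.2 hHF hHsF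
  have hF'card : F'.card = k := by
    have := hF'.two_mul_card
    rw [card_filter_inCD hf] at this
    omega
  have hpF' : 0 < pM f Mm F' := hgoodHs.1.1.trans_le
    (hgoodHs.1.2 F' hF'.1 hF'card hHsF' fun e he => hF'.insideCD he).1
  obtain ⟨M, hM, hF'M, hMm⟩ := nonempty_of_ncard_div_ne_zero hpF'.ne'
  have hQ : (U, M) ∈ Qset (npar k m) (tpar k m) 1 := by
    refine ⟨hU.1, hM.1, ?_⟩
    rw [coe_inter_cutSet_eq_filter hU hUC hM hF' hF'M, Set.ncard_coe_finset, hcross]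
    have := card_inter_add_card_sdiff H Hs
    omega
  exact (mu_pos_of_mem (R := Uu ×ˢ Mm) ⟨⟨hUu, hMm⟩, hQ⟩).ne' hmu1

/-- For a rectangle `𝓡 = 𝓤 × 𝓜` with `μ₁(𝓡) = 0`: if `H, H* ⊆ F` are two 3-matchings inside a
`k`-matching `F ⊆ C × D` such that both `(T,H)` and `(T,H*)` are good, then `|H ∩ H*| ≥ 2`. -/
theorem good_3subsets_overlap (k m : ℕ) (hk : Odd k) (hk3 : 3 ≤ k) (hm : Odd m)
    (ε : ℝ) (hε : 0 < ε)
    (Uu : Set (Finset (Fin (npar k m)))) (Mm : Set (Finset (Edge (npar k m))))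
    (hUu : ∀ U ∈ Uu, U.card = tpar k m) (hMm : ∀ M ∈ Mm, IsPM M)
    (hmu1 : mu (npar k m) (tpar k m) 1 (Uu ×ˢ Mm) = 0)
    (f : Fin (npar k m) → Lbl m) (hf : IsPartition (npar k m) k m f)
    (F : Finset (Edge (npar k m))) (hF : IsCDMatching f k F)
    (H Hs : Finset (Edge (npar k m)))
    (hHF : H ⊆ F) (hH3 : H.card = 3) (hHsF : Hs ⊆ F) (hHs3 : Hs.card = 3)
    (hgoodH : Good ε k (tpar k m) f Mm Uu H)
    (hgoodHs : Good ε k (tpar k m) f Mm Uu Hs) :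
    2 ≤ (H ∩ Hs).card :=
  good_3subsets_overlap_general k m ε Uu Mm hmu1 f hf F hF H Hs hHF hH3 hHsF hgoodH hgoodHs

end MatchingLB
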